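/- arXiv:2109.09110 — 2 statements merged into one kernel-verified Lean document; each statement's English description precedes it below -/
import Mathlib

section
/- Let n ≥ 2 and let m_1, …, m_n be positive real numbers. Define F : (ℝ²)ⁿ → (ℝ²)ⁿ by F_i(q_1, …, q_n) = q_i − Σ_{j≠i} (m_j / |q_i − q_j|³)(q_i − q_j) on configurations of pairwise distinct points. Let q = (q_1, …, q_n) be a normalized central configuration (F(q) = 0) that is non-degenerate, i.e. the derivative DF(q), a linear map on (ℝ²)ⁿ ≅ ℝ^{2n}, has rank 2n − 1. Assume moreover that q_{n-1} = (x_{n-1}, 0) with x_{n-1} ≠ 0 and x_{n-1} ≠ x_n (first coordinates). Define the reduced map G : (ℝ²)^{n-2} × ℝ → (ℝ²)^{n-2} × ℝ on variables (q_1, …, q_{n-2}, x_{n-1}) by substituting q_{n-1} = (x_{n-1}, 0) and q_n = −(1/m_n)(Σ_{i=1}^{n-2} m_i q_i + m_{n-1}(x_{n-1},0)), whose components are F_i for i = 1, …, n−2 together with the first (x) component of F_{n-1}. Then the derivative DG at (q_1, …, q_{n-2}, x_{n-1}) is invertible. -/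
open Finset

abbrev E2 : Type := EuclideanSpace ℝ (Fin 2)

/-- The point `(a, b)` of the Euclidean plane. -/
noncomputable def pt (a b : ℝ) : E2 := (WithLp.equiv 2 (Fin 2 → ℝ)).symm ![a, b]

/-- `F_i(q) = q_i − Σ_{j≠i} (m_j / |q_i − q_j|³)(q_i − q_j)`; normalized central
configurations are the (pairwise distinct) zeros of `F`. -/
noncomputable def Fmap {ι : Type} [Fintype ι] [DecidableEq ι] (m : ι → ℝ) (q : ι → E2) :
    ι → E2 :=
  fun i => q i - ∑ j ∈ Finset.univ.filter (· ≠ i), (m j / ‖q i - q j‖ ^ 3) • (q i - q j)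

/-- The configuration of `n + 2` bodies built from the reduced variables
`(q_1, …, q_n, x_{n+1})`: body `n` (0-based) is `(x, 0)` and the last body is obtained
from the center-of-mass relation. -/
noncomputable def redConfig (n : ℕ) (m : Fin (n + 2) → ℝ) (z : (Fin n → E2) × ℝ) :
    Fin (n + 2) → E2 :=
  Fin.snoc (Fin.snoc z.1 (pt z.2 0))
    ((-(m (Fin.last (n + 1)))⁻¹) •
      (∑ i : Fin n, m i.castSucc.castSucc • z.1 i + m ((Fin.last n).castSucc) • pt z.2 0))

/-- The reduced map `G`: the components `F_i` for the first `n` bodies and the first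
(`x`) component of `F` at body `n`, evaluated on the reduced configuration. -/
noncomputable def Gmap (n : ℕ) (m : Fin (n + 2) → ℝ) (z : (Fin n → E2) × ℝ) :
    (Fin n → E2) × ℝ :=
  (fun i => Fmap m (redConfig n m z) i.castSucc.castSucc,
   Fmap m (redConfig n m z) ((Fin.last n).castSucc) 0)

/-!
Rotating a normalized central configuration gives another one, so `DF(q)` kills the rotation
field `J q = (J q_1, …, J q_n)` with `J = rot90`; non-degeneracy says that `J q` spans the
kernel. Differentiating the identities `∑ mᵢ Fᵢ(q) = ∑ mᵢ qᵢ` (momentum) and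
`∑ mᵢ ⟪Fᵢ(q), J qᵢ⟫ = 0` (angular momentum) shows that `DG(z) w = 0` forces `DF(q) v = 0` for
the displacement `v` of the bodies induced by `w`: since `x_{n-1} ≠ x_n`, the two equations
determine the components of `DF(q) v` at the last two bodies, which `G` discards. Hence
`v = t • J q`, and `t = 0` because the `y`-coordinate of body `n - 1` is frozen while
`(J q_{n-1})_y = x_{n-1} ≠ 0`.
-/

open scoped RealInnerProductSpace

@[simp] lemma pt_apply_zero (a b : ℝ) : pt a b 0 = a := by simp [pt]

@[simp] lemma pt_apply_one (a b : ℝ) : pt a b 1 = b := by simp [pt]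

lemma E2_ext {x y : E2} (h0 : x 0 = y 0) (h1 : x 1 = y 1) : x = y := by
  ext i; fin_cases i <;> assumption

lemma inner_E2 (x y : E2) : ⟪x, y⟫ = x 0 * y 0 + x 1 * y 1 := by
  simp [PiLp.inner_apply, Fin.sum_univ_two, mul_comm]

lemma pt_add_zero (a b : ℝ) : pt (a + b) 0 = pt a 0 + pt b 0 := E2_ext (by simp) (by simp)

lemma pt_mul_zero (c a : ℝ) : pt (c * a) 0 = c • pt a 0 := E2_ext (by simp) (by simp)

noncomputable def rot90 : E2 →ₗ[ℝ] E2 where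
  toFun x := pt (-x 1) (x 0)
  map_add' x y := E2_ext (by simp; ring) (by simp)
  map_smul' c x := E2_ext (by simp) (by simp)

@[simp] lemma rot90_apply_zero (x : E2) : rot90 x 0 = -x 1 := by simp [rot90]

@[simp] lemma rot90_apply_one (x : E2) : rot90 x 1 = x 0 := by simp [rot90]

lemma inner_rot90_self (x : E2) : ⟪x, rot90 x⟫ = 0 := by
  simp [inner_E2]; ring

noncomputable def planeRotation (θ : ℝ) : E2 →ₗᵢ[ℝ] E2 where
  toLinearMap := Real.cos θ • LinearMap.id + Real.sin θ • rot90
  norm_map' x := by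
    rw [EuclideanSpace.norm_eq, EuclideanSpace.norm_eq]
    congr 1
    simp [Fin.sum_univ_two]
    linear_combination (x 0 ^ 2 + x 1 ^ 2) * Real.sin_sq_add_cos_sq θ

lemma eq_zero_of_two_body {m₁ m₂ : ℝ} {a b x y : E2} (hm₁ : m₁ ≠ 0)
    (hsum : m₁ • a + m₂ • b = 0) (hang : m₁ * ⟪a, rot90 x⟫ + m₂ * ⟪b, rot90 y⟫ = 0)
    (ha : a 0 = 0) (hxy : x 0 ≠ y 0) : a = 0 := by
  have h0 : m₁ * a 0 + m₂ * b 0 = 0 := by simpa using congr($hsum 0)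
  have h1 : m₁ * a 1 + m₂ * b 1 = 0 := by simpa using congr($hsum 1)
  simp only [inner_E2, rot90_apply_zero, rot90_apply_one] at hang
  have key : m₁ * (x 0 - y 0) * a 1 = 0 := by
    linear_combination hang - y 0 * h1 + y 1 * h0 + m₁ * (x 1 - y 1) * ha
  have ha1 : a 1 = 0 :=
    (mul_eq_zero.mp key).resolve_left (mul_ne_zero hm₁ (sub_ne_zero.mpr hxy))
  exact E2_ext (by simpa using ha) (by simpa using ha1)

lemma ker_eq_span_singleton_of_finrank_range {K V W : Type*} [Field K] [AddCommGroup V]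
    [Module K V] [FiniteDimensional K V] [AddCommGroup W] [Module K W] (f : V →ₗ[K] W)
    (hrank : Module.finrank K (LinearMap.range f) = Module.finrank K V - 1)
    {u : V} (hu : u ≠ 0) (hfu : f u = 0) :
    LinearMap.ker f = K ∙ u := by
  refine (Submodule.eq_of_le_of_finrank_le ?_ ?_).symm
  · exact (Submodule.span_singleton_le_iff_mem u _).mpr hfu
  · have hpos : 0 < Module.finrank K V := Module.finrank_pos_iff_exists_ne_zero.mpr ⟨u, hu⟩
    have := f.finrank_range_add_finrank_ker
    rw [finrank_span_singleton hu]
    omega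

lemma sum_sum_eq_zero_of_antisymm {ι M : Type*} [Fintype ι] [AddCommGroup M] [IsAddTorsionFree M]
    (f : ι → ι → M) (hf : ∀ i j, f j i = -f i j) : ∑ i, ∑ j, f i j = 0 := by
  refine self_eq_neg.mp ?_
  calc ∑ i, ∑ j, f i j = ∑ j, ∑ i, f i j := Finset.sum_comm
    _ = ∑ j, ∑ i, -f j i := Finset.sum_congr rfl fun j _ => Finset.sum_congr rfl fun i _ => hf j i
    _ = -∑ i, ∑ j, f i j := by simp only [Finset.sum_neg_distrib]

section Fmap

variable {ι : Type} [Fintype ι] [DecidableEq ι]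

lemma Fmap_apply (m : ι → ℝ) (q : ι → E2) (i : ι) :
    Fmap m q i = q i - ∑ j, (m j / ‖q i - q j‖ ^ 3) • (q i - q j) := by
  rw [Fmap, Finset.sum_filter_of_ne]
  rintro j - h rfl
  exact h (by rw [sub_self, smul_zero])

lemma sum_smul_Fmap (m : ι → ℝ) (q : ι → E2) :
    ∑ i, m i • Fmap m q i = ∑ i, m i • q i := by
  have := IsAddTorsionFree.of_isTorsionFree ℝ E2
  have hpair : ∑ i, ∑ j, (m i * (m j / ‖q i - q j‖ ^ 3)) • (q i - q j) = 0 :=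
    sum_sum_eq_zero_of_antisymm _ fun i j => by
      rw [norm_sub_rev, ← neg_sub (q i), smul_neg, mul_div_left_comm]
  calc ∑ i, m i • Fmap m q i
      = ∑ i, m i • q i - ∑ i, ∑ j, (m i * (m j / ‖q i - q j‖ ^ 3)) • (q i - q j) := by
        simp only [Fmap_apply, smul_sub, Finset.smul_sum, smul_smul, Finset.sum_sub_distrib]
    _ = ∑ i, m i • q i := by rw [hpair, sub_zero]

lemma sum_inner_Fmap_rot90 (m : ι → ℝ) (q : ι → E2) :
    ∑ i, m i * ⟪Fmap m q i, rot90 (q i)⟫ = 0 := by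
  -- `rot90` is skew, so `⟪q i - q j, rot90 (q i)⟫ = ⟪q i - q j, rot90 (q j)⟫`.
  have hpair : ∑ i, ∑ j, m i * (m j / ‖q i - q j‖ ^ 3) * ⟪q i - q j, rot90 (q i)⟫ = 0 :=
    sum_sum_eq_zero_of_antisymm _ fun i j => by
      rw [norm_sub_rev]
      simp only [inner_E2, rot90_apply_zero, rot90_apply_one, PiLp.sub_apply]
      ring
  simpa [Fmap_apply, inner_sub_left, inner_rot90_self, sum_inner, real_inner_smul_left,
    Finset.mul_sum, mul_assoc] using hpair

lemma Fmap_comp_linearIsometry (m : ι → ℝ) (q : ι → E2) (R : E2 →ₗᵢ[ℝ] E2) :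
    Fmap m (fun i => R (q i)) = fun i => R (Fmap m q i) := by
  funext i
  simp only [Fmap, ← map_sub, LinearIsometry.norm_map, ← map_smul, ← map_sum]

lemma differentiableAt_Fmap (m : ι → ℝ) {q : ι → E2} (hinj : Function.Injective q) :
    DifferentiableAt ℝ (Fmap m) q := by
  refine differentiableAt_pi.mpr fun i => (differentiableAt_apply i q).sub <|
    DifferentiableAt.fun_sum fun j hj => ?_
  have hne : q i - q j ≠ 0 := sub_ne_zero.mpr (hinj.ne (Finset.mem_filter.mp hj).2.symm)
  have hsub : DifferentiableAt ℝ (fun x : ι → E2 => x i - x j) q := by fun_prop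
  have hnorm : DifferentiableAt ℝ (fun x : ι → E2 => ‖x i - x j‖) q := hsub.norm ℝ hne
  have hcoeff : DifferentiableAt ℝ (fun x : ι → E2 => m j / ‖x i - x j‖ ^ 3) q := by
    fun_prop (disch := simpa using hne)
  exact hcoeff.smul hsub

lemma hasDerivAt_Fmap_line (m : ι → ℝ) {q : ι → E2} (hinj : Function.Injective q)
    (v : ι → E2) :
    HasDerivAt (fun t : ℝ => Fmap m (q + t • v)) (fderiv ℝ (Fmap m) q v) 0 := by
  have hline : HasDerivAt (fun t : ℝ => q + t • v) v 0 := by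
    simpa using ((hasDerivAt_id (0 : ℝ)).smul_const v).const_add q
  have hF : HasFDerivAt (Fmap m) (fderiv ℝ (Fmap m) q) (q + (0 : ℝ) • v) := by
    simpa using (differentiableAt_Fmap m hinj).hasFDerivAt
  exact hF.comp_hasDerivAt 0 hline

lemma sum_smul_fderiv_Fmap (m : ι → ℝ) {q : ι → E2} (hinj : Function.Injective q)
    (v : ι → E2) :
    ∑ i, m i • fderiv ℝ (Fmap m) q v i = ∑ i, m i • v i := by
  have hF := HasDerivAt.fun_sum fun i (_ : i ∈ univ) =>
    (hasDerivAt_pi.mp (hasDerivAt_Fmap_line m hinj v) i).const_smul (m i)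
  have hid := HasDerivAt.fun_sum fun i (_ : i ∈ univ) =>
    (((hasDerivAt_id (0 : ℝ)).smul_const (v i)).const_add (q i)).const_smul (m i)
  simp only [sum_smul_Fmap, Pi.add_apply, Pi.smul_apply] at hF
  simpa using hF.unique hid

lemma sum_inner_fderiv_Fmap_rot90 (m : ι → ℝ) {q : ι → E2} (hinj : Function.Injective q)
    (hF : Fmap m q = 0) (v : ι → E2) :
    ∑ i, m i * ⟪fderiv ℝ (Fmap m) q v i, rot90 (q i)⟫ = 0 := by
  have hrot : ∀ i, HasDerivAt (fun t : ℝ => rot90 (q i + t • v i)) (rot90 (v i)) 0 := fun i => by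
    have hline : HasDerivAt (fun t : ℝ => q i + t • v i) (v i) 0 := by
      simpa using ((hasDerivAt_id (0 : ℝ)).smul_const (v i)).const_add (q i)
    exact rot90.toContinuousLinearMap.hasFDerivAt.comp_hasDerivAt 0 hline
  have h := HasDerivAt.fun_sum fun i (_ : i ∈ univ) =>
    ((hasDerivAt_pi.mp (hasDerivAt_Fmap_line m hinj v) i).inner ℝ (hrot i)).const_mul (m i)
  have hzero : (fun t : ℝ => ∑ i, m i * ⟪Fmap m (q + t • v) i, rot90 (q i + t • v i)⟫) = 0 :=
    funext fun t => sum_inner_Fmap_rot90 m (q + t • v)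
  rw [hzero] at h
  simpa [hF] using h.unique (hasDerivAt_const 0 0)

lemma fderiv_Fmap_rot90 (m : ι → ℝ) {q : ι → E2} (hinj : Function.Injective q)
    (hF : Fmap m q = 0) :
    fderiv ℝ (Fmap m) q (fun i => rot90 (q i)) = 0 := by
  have hγ : HasDerivAt (fun θ : ℝ => Real.cos θ • q + Real.sin θ • fun i => rot90 (q i))
      (fun i => rot90 (q i)) 0 := by
    simpa using ((Real.hasDerivAt_cos 0).smul_const q).fun_add
      ((Real.hasDerivAt_sin 0).smul_const fun i => rot90 (q i))
  have hD : HasFDerivAt (Fmap m) (fderiv ℝ (Fmap m) q)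
      (Real.cos 0 • q + Real.sin 0 • fun i => rot90 (q i)) := by
    simpa using (differentiableAt_Fmap m hinj).hasFDerivAt
  have hconst : (fun θ : ℝ => Fmap m (Real.cos θ • q + Real.sin θ • fun i => rot90 (q i))) = 0 :=
    funext fun θ => (Fmap_comp_linearIsometry m q (planeRotation θ)).trans <|
      funext fun i => by simp [hF]
  have h := hD.comp_hasDerivAt 0 hγ
  rw [Function.comp_def, hconst] at h
  exact h.unique (hasDerivAt_const 0 0)

lemma ker_fderiv_Fmap (m : ι → ℝ) {q : ι → E2} (hinj : Function.Injective q)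
    (hF : Fmap m q = 0) (hq : q ≠ 0)
    (hrank : Module.finrank ℝ (LinearMap.range
      (fderiv ℝ (Fmap m) q : (ι → E2) →ₗ[ℝ] ι → E2)) = 2 * Fintype.card ι - 1) :
    LinearMap.ker (fderiv ℝ (Fmap m) q : (ι → E2) →ₗ[ℝ] ι → E2) =
      ℝ ∙ fun i => rot90 (q i) := by
  refine ker_eq_span_singleton_of_finrank_range _ ?_ ?_ (fderiv_Fmap_rot90 m hinj hF)
  · simpa [Module.finrank_pi_fintype, finrank_euclideanSpace_fin, mul_comm] using hrank
  · exact fun h => hq <| funext fun i =>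
      E2_ext (by simpa using congr($h i 1)) (by simpa using congr($h i 0))

end Fmap

section Reduced

variable {n : ℕ} {m : Fin (n + 2) → ℝ}

variable (n m) in
noncomputable def redConfigₗ : ((Fin n → E2) × ℝ) →ₗ[ℝ] (Fin (n + 2) → E2) where
  toFun := redConfig n m
  map_add' z w := by
    funext i
    refine Fin.lastCases ?_ (fun j => Fin.lastCases ?_ (fun k => ?_) j) i
    · simp only [redConfig, Fin.snoc_last, Pi.add_apply, Prod.fst_add, Prod.snd_add, pt_add_zero]
      rw [← smul_add]
      congr 1
      simp only [smul_add, Finset.sum_add_distrib]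
      abel
    · simp [redConfig, pt_add_zero]
    · simp [redConfig]
  map_smul' c z := by
    funext i
    refine Fin.lastCases ?_ (fun j => Fin.lastCases ?_ (fun k => ?_) j) i
    · simp only [redConfig, Fin.snoc_last, Pi.smul_apply, Prod.smul_fst, Prod.smul_snd,
        smul_eq_mul, pt_mul_zero, smul_comm _ c, ← Finset.smul_sum, ← smul_add, RingHom.id_apply]
    · simp [redConfig, pt_mul_zero]
    · simp [redConfig]

variable (n) in
noncomputable def reducedProj : (Fin (n + 2) → E2) →ₗ[ℝ] (Fin n → E2) × ℝ where
  toFun v := (fun k => v k.castSucc.castSucc, v (Fin.last n).castSucc 0)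
  map_add' _ _ := rfl
  map_smul' _ _ := rfl

@[simp] lemma redConfig_castSucc_castSucc (z : (Fin n → E2) × ℝ) (k : Fin n) :
    redConfig n m z k.castSucc.castSucc = z.1 k := by
  simp [redConfig]

@[simp] lemma redConfig_castSucc_last (z : (Fin n → E2) × ℝ) :
    redConfig n m z (Fin.last n).castSucc = pt z.2 0 := by
  simp [redConfig]

lemma redConfig_last (z : (Fin n → E2) × ℝ) :
    redConfig n m z (Fin.last (n + 1)) = (-(m (Fin.last (n + 1)))⁻¹) •
      (∑ i : Fin n, m i.castSucc.castSucc • z.1 i + m ((Fin.last n).castSucc) • pt z.2 0) := by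
  simp [redConfig]

lemma sum_smul_redConfig (hm : m (Fin.last (n + 1)) ≠ 0) (z : (Fin n → E2) × ℝ) :
    ∑ i, m i • redConfig n m z i = 0 := by
  simp only [Fin.sum_univ_castSucc, redConfig_castSucc_castSucc, redConfig_castSucc_last]
  rw [redConfig_last, smul_smul, mul_neg, mul_inv_cancel₀ hm, neg_one_smul, add_neg_cancel]

lemma redConfig_eq_of_sum_smul_eq_zero (hm : m (Fin.last (n + 1)) ≠ 0) {q : Fin (n + 2) → E2}
    (hcom : ∑ i, m i • q i = 0) (hy : q (Fin.last n).castSucc 1 = 0) :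
    redConfig n m (fun k => q k.castSucc.castSucc, q (Fin.last n).castSucc 0) = q := by
  have hpt : pt (q (Fin.last n).castSucc 0) 0 = q (Fin.last n).castSucc :=
    E2_ext (by simp) (by simp [hy])
  simp only [Fin.sum_univ_castSucc] at hcom
  funext i
  refine Fin.lastCases ?_ (fun j => Fin.lastCases ?_ (fun k => ?_) j) i
  · rw [redConfig_last, hpt, eq_neg_of_add_eq_zero_left hcom, smul_neg, neg_smul, neg_neg, smul_smul,
      inv_mul_cancel₀ hm, one_smul]
  · simp [hpt]
  · simp

lemma eq_zero_of_redConfig_eq_zero {z : (Fin n → E2) × ℝ} (hz : redConfig n m z = 0) : z = 0 := by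
  have h1 : z.1 = 0 := funext fun k => by
    simpa using congr_fun hz k.castSucc.castSucc
  have h2 : z.2 = 0 := by
    simpa using congr($(congr_fun hz (Fin.last n).castSucc) 0)
  exact Prod.ext h1 h2

lemma hasFDerivAt_Gmap {z : (Fin n → E2) × ℝ} (hinj : Function.Injective (redConfig n m z)) :
    HasFDerivAt (Gmap n m) ((reducedProj n).toContinuousLinearMap ∘L
      fderiv ℝ (Fmap m) (redConfig n m z) ∘L (redConfigₗ n m).toContinuousLinearMap) z :=
  (reducedProj n).toContinuousLinearMap.hasFDerivAt.comp z <|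
    (differentiableAt_Fmap m hinj).hasFDerivAt.comp z
      (redConfigₗ n m).toContinuousLinearMap.hasFDerivAt

lemma eq_zero_of_reducedProj_eq_zero (hm : ∀ i, m i ≠ 0) {q a : Fin (n + 2) → E2}
    (hxn : q (Fin.last n).castSucc 0 ≠ q (Fin.last (n + 1)) 0)
    (hsum : ∑ i, m i • a i = 0) (hang : ∑ i, m i * ⟪a i, rot90 (q i)⟫ = 0)
    (ha : reducedProj n a = 0) : a = 0 := by
  obtain ⟨hfirst, hx⟩ := Prod.ext_iff.mp ha
  have hk : ∀ k : Fin n, a k.castSucc.castSucc = 0 := fun k => congr_fun hfirst k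
  simp only [Fin.sum_univ_castSucc, hk, smul_zero, inner_zero_left, mul_zero,
    Finset.sum_const_zero, zero_add] at hsum hang
  have hpen : a (Fin.last n).castSucc = 0 := eq_zero_of_two_body (hm _) hsum hang hx hxn
  have hlast : a (Fin.last (n + 1)) = 0 := by
    simpa [hpen, hm] using hsum
  funext i
  exact Fin.lastCases hlast (fun j => Fin.lastCases hpen hk j) i

end Reduced

/-- a non-degenerate normalized central configuration of `n + 2` bodies with
`q_{n}` on the positive or negative `x`-axis (second coordinate `0`, first coordinate
nonzero and different from the first coordinate of the last body) gives a point at which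
the derivative of the reduced map `G` is invertible. -/
theorem stmt3 (n : ℕ) (m : Fin (n + 2) → ℝ) (hm : ∀ i, 0 < m i)
    (q : Fin (n + 2) → E2) (hinj : Function.Injective q)
    (hF : Fmap m q = 0)
    (hrank : Module.finrank ℝ (LinearMap.range ((fderiv ℝ (Fmap m) q : (Fin (n + 2) → E2) →L[ℝ] Fin (n + 2) → E2) :
      (Fin (n + 2) → E2) →ₗ[ℝ] Fin (n + 2) → E2)) = 2 * (n + 2) - 1)
    (hy : q ((Fin.last n).castSucc) 1 = 0)
    (hx0 : q ((Fin.last n).castSucc) 0 ≠ 0)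
    (hxn : q ((Fin.last n).castSucc) 0 ≠ q (Fin.last (n + 1)) 0) :
    Function.Bijective
      (fderiv ℝ (Gmap n m) (fun i => q i.castSucc.castSucc, q ((Fin.last n).castSucc) 0)) := by
  have hm0 : ∀ i, m i ≠ 0 := fun i => (hm i).ne'
  set DF := fderiv ℝ (Fmap m) q
  have hcom : ∑ i, m i • q i = 0 := by simp [← sum_smul_Fmap m q, hF]
  have hq := redConfig_eq_of_sum_smul_eq_zero (hm0 _) hcom hy
  have hG := hasFDerivAt_Gmap (m := m) (hq ▸ hinj)
  rw [hq] at hG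
  rw [hG.fderiv]
  have hker := ker_fderiv_Fmap m hinj hF (fun h => hx0 (by simp [h])) (by simpa using hrank)
  have hT : Function.Injective ((reducedProj n).toContinuousLinearMap ∘L DF ∘L
      (redConfigₗ n m).toContinuousLinearMap) := by
    refine (injective_iff_map_eq_zero _).mpr fun w hw => eq_zero_of_redConfig_eq_zero (m := m) ?_
    have hDv : DF (redConfig n m w) = 0 :=
      eq_zero_of_reducedProj_eq_zero hm0 hxn
        (by rw [sum_smul_fderiv_Fmap m hinj, sum_smul_redConfig (hm0 _)])
        (sum_inner_fderiv_Fmap_rot90 m hinj hF _) hw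
    obtain ⟨t, ht⟩ := Submodule.mem_span_singleton.mp (hker ▸ LinearMap.mem_ker.mpr hDv)
    have ht0 : t = 0 := by
      simpa [hx0] using congr($ht (Fin.last n).castSucc 1)
    rw [← ht, ht0, zero_smul]
  exact ⟨hT, LinearMap.injective_iff_surjective.mp hT⟩
end

section
/- Let N ≥ 2 and k ≥ 1. For each s ∈ ℕ let m_1(s), …, m_N(s) and μ_1(s), …, μ_k(s) be positive masses and let (q_1(s), …, q_N(s), p_1(s), …, p_k(s)) be a normalized central configuration of the N + k bodies with these masses. Assume that as s → ∞: m_i(s) → m̄_i > 0 for i = 1, …, N; μ_j(s) → 0 for j = 1, …, k; q_i(s) → q̄_i for i = 1, …, N; and p_j(s) → p̄_j for j = 1, …, k. Then the points q̄_1, …, q̄_N are pairwise distinct and (q̄_1, …, q̄_N) is a normalized central configuration for the masses m̄_1, …, m̄_N, i.e. q̄_i = Σ_{j≠i, j≤N} (m̄_j / |q̄_i − q̄_j|³)(q̄_i − q̄_j) for every i = 1, …, N. -/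
open Finset Filter Topology

/-- The equations for a normalized central configuration:
`q_i = Σ_{j≠i} (m_j / |q_i − q_j|³)(q_i − q_j)` for every `i`. -/
def CCeqs {ι : Type} [Fintype ι] [DecidableEq ι] (m : ι → ℝ) (q : ι → E2) : Prop :=
  ∀ i, q i = ∑ j ∈ Finset.univ.filter (· ≠ i), (m j / ‖q i - q j‖ ^ 3) • (q i - q j)

/-!
Multiplying the equation of body `a` by its mass `M a` turns it into
`M a • Q a = ∑ b, F a b` with an antisymmetric pair force `F`.

*Distinctness.* Pairing this identity with `Q a` and summing over `a` gives the virial identity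
`2 ∑ M a ‖Q a‖² = ∑_{a, b} M a M b / ‖Q a - Q b‖`, so `M a M b ≤ 2 I ‖Q a - Q b‖` with `I`
the moment of inertia. Along the sequence `I` stays bounded and the heavy masses stay away
from zero, so two heavy bodies cannot collide in the limit.

*Limit equation.* Let `C` be the cluster of bodies tending to `q̄ i`. Summing the identity over
`C`, the forces inside `C` cancel, which removes the unbounded interactions between the heavy
body and nearby light bodies: `∑_{a ∈ C} M a • Q a = ∑_{a ∈ C, b ∉ C} F a b`. Every term now
converges, and in the limit only body `i` inside `C` and the heavy bodies outside `C` carry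
mass, which leaves `m̄ i • q̄ i = ∑_{j ≠ i} F̄ i j`.
-/

open scoped RealInnerProductSpace

theorem sum_sum_eq_zero_of_antisymm_s7 {ι β : Type*} [AddCommGroup β] (s : Finset ι)
    (F : ι → ι → β) (hF : ∀ a b, F b a = -F a b) (hdiag : ∀ a, F a a = 0) :
    ∑ a ∈ s, ∑ b ∈ s, F a b = 0 := by
  rw [← sum_product']
  refine sum_involution (fun x _ => x.swap)
    (fun x _ => by rw [Prod.fst_swap, Prod.snd_swap, hF, neg_add_cancel]) ?_
    (fun x hx => by simpa [and_comm] using hx) (fun x _ => x.swap_swap)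
  rintro ⟨a, b⟩ _ hne heq
  obtain rfl : a = b := congrArg Prod.fst heq.symm
  exact hne (hdiag a)

section PairForce

variable {ι V : Type*} [NormedAddCommGroup V] [NormedSpace ℝ V]

/-- `M a` times the `b`-th summand of the central-configuration equation of body `a`.
As `x / 0 = 0` it vanishes when `Q a = Q b`, so sums of it may run over all `b`. -/
noncomputable def pairForce (M : ι → ℝ) (Q : ι → V) (a b : ι) : V :=
  (M a * M b / ‖Q a - Q b‖ ^ 3) • (Q a - Q b)

theorem pairForce_swap (M : ι → ℝ) (Q : ι → V) (a b : ι) :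
    pairForce M Q b a = -pairForce M Q a b := by
  rw [pairForce, pairForce, ← neg_sub (Q a), norm_neg, smul_neg, mul_comm]

theorem pairForce_of_eq (M : ι → ℝ) {Q : ι → V} {a b : ι} (h : Q a = Q b) :
    pairForce M Q a b = 0 := by
  simp [pairForce, h]

theorem pairForce_self (M : ι → ℝ) (Q : ι → V) (a : ι) : pairForce M Q a a = 0 :=
  pairForce_of_eq M rfl

theorem pairForce_of_left_eq_zero {M : ι → ℝ} (Q : ι → V) {a : ι} (h : M a = 0) (b : ι) :
    pairForce M Q a b = 0 := by
  simp [pairForce, h]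

theorem tendsto_pairForce {α : Type*} {l : Filter α} {M : α → ι → ℝ} {Q : α → ι → V}
    {Mb : ι → ℝ} {Qb : ι → V} (hM : ∀ a, Tendsto (fun s => M s a) l (𝓝 (Mb a)))
    (hQ : ∀ a, Tendsto (fun s => Q s a) l (𝓝 (Qb a))) {a b : ι} (hab : Qb a ≠ Qb b) :
    Tendsto (fun s => pairForce (M s) (Q s) a b) l (𝓝 (pairForce Mb Qb a b)) :=
  (((hM a).mul (hM b)).div (((hQ a).sub (hQ b)).norm.pow 3)
    (pow_ne_zero _ (norm_ne_zero_iff.2 (sub_ne_zero.2 hab)))).smul ((hQ a).sub (hQ b))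

theorem inner_pairForce {W : Type*} [NormedAddCommGroup W] [InnerProductSpace ℝ W]
    (M : ι → ℝ) (Q : ι → W) (a b : ι) :
    ⟪pairForce M Q a b, Q a - Q b⟫ = M a * M b / ‖Q a - Q b‖ := by
  rw [pairForce, real_inner_smul_left, real_inner_self_eq_norm_sq]
  rcases eq_or_ne ‖Q a - Q b‖ 0 with h | h
  · simp [h]
  · field_simp

end PairForce

section CentralConfiguration

variable {ι : Type} [Fintype ι] [DecidableEq ι] {M : ι → ℝ} {Q : ι → E2}

theorem sum_pairForce_eq_smul (a : ι) :
    ∑ b, pairForce M Q a b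
      = M a • ∑ b ∈ univ.filter (· ≠ a), (M b / ‖Q a - Q b‖ ^ 3) • (Q a - Q b) := by
  have hdiag : ∀ b ∈ univ, pairForce M Q a b ≠ 0 → b ≠ a := fun b _ hb hba =>
    hb (hba ▸ pairForce_self M Q a)
  rw [← sum_filter_of_ne hdiag, smul_sum]
  refine sum_congr rfl fun b _ => ?_
  rw [pairForce, smul_smul, mul_div_assoc]

theorem CCeqs.smul_eq_sum_pairForce (h : CCeqs M Q) (a : ι) :
    M a • Q a = ∑ b, pairForce M Q a b := by
  rw [sum_pairForce_eq_smul, ← h a]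

theorem ccEqs_of_smul_eq_sum_pairForce (hM : ∀ a, M a ≠ 0)
    (h : ∀ a, M a • Q a = ∑ b, pairForce M Q a b) : CCeqs M Q := fun a =>
  smul_right_injective E2 (hM a) ((h a).trans (sum_pairForce_eq_smul a))

theorem CCeqs.two_mul_sum_mul_norm_sq (h : CCeqs M Q) :
    2 * ∑ a, M a * ‖Q a‖ ^ 2 = ∑ a, ∑ b, M a * M b / ‖Q a - Q b‖ := by
  have hmoment : ∀ a, M a * ‖Q a‖ ^ 2 = ∑ b, ⟪pairForce M Q a b, Q a⟫ := fun a => by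
    rw [← sum_inner, ← h.smul_eq_sum_pairForce, real_inner_smul_left,
      real_inner_self_eq_norm_sq]
  have hcancel : ∑ a, ∑ b, ⟪pairForce M Q a b, Q a + Q b⟫ = 0 :=
    sum_sum_eq_zero_of_antisymm_s7 _ _
      (fun a b => by rw [pairForce_swap, inner_neg_left, add_comm])
      (fun a => by rw [pairForce_self, inner_zero_left])
  calc 2 * ∑ a, M a * ‖Q a‖ ^ 2
      = ∑ a, ∑ b, (⟪pairForce M Q a b, Q a + Q b⟫ + ⟪pairForce M Q a b, Q a - Q b⟫) := by
        simp_rw [hmoment, mul_sum, ← inner_add_right, add_add_sub_cancel, ← two_smul ℝ (Q _),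
          real_inner_smul_right]
    _ = ∑ a, ∑ b, M a * M b / ‖Q a - Q b‖ := by
        simp_rw [sum_add_distrib, hcancel, zero_add, inner_pairForce]

theorem CCeqs.mul_le_mul_norm_sub (h : CCeqs M Q) (hM : ∀ a, 0 ≤ M a) {a b : ι}
    (hab : Q a ≠ Q b) : M a * M b ≤ 2 * (∑ c, M c * ‖Q c‖ ^ 2) * ‖Q a - Q b‖ := by
  rw [← div_le_iff₀ (norm_pos_iff.2 (sub_ne_zero.2 hab)), h.two_mul_sum_mul_norm_sq]
  have hnonneg : ∀ c d, 0 ≤ M c * M d / ‖Q c - Q d‖ := fun c d => by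
    have := hM c; have := hM d; positivity
  calc M a * M b / ‖Q a - Q b‖
      ≤ ∑ d, M a * M d / ‖Q a - Q d‖ := single_le_sum (fun d _ => hnonneg a d) (mem_univ b)
    _ ≤ ∑ c, ∑ d, M c * M d / ‖Q c - Q d‖ :=
        single_le_sum (f := fun c => ∑ d, M c * M d / ‖Q c - Q d‖)
          (fun c _ => sum_nonneg fun d _ => hnonneg c d) (mem_univ a)

theorem CCeqs.sum_smul_eq_sum_sum_pairForce_compl (h : CCeqs M Q) (C : Finset ι) :
    ∑ a ∈ C, M a • Q a = ∑ a ∈ C, ∑ b ∈ Cᶜ, pairForce M Q a b := by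
  calc ∑ a ∈ C, M a • Q a
      = ∑ a ∈ C, ∑ b ∈ C, pairForce M Q a b + ∑ a ∈ C, ∑ b ∈ Cᶜ, pairForce M Q a b := by
        rw [← sum_add_distrib]
        exact sum_congr rfl fun a _ => by rw [sum_add_sum_compl, h.smul_eq_sum_pairForce]
    _ = ∑ a ∈ C, ∑ b ∈ Cᶜ, pairForce M Q a b := by
        rw [sum_sum_eq_zero_of_antisymm_s7 C _ (pairForce_swap M Q) (pairForce_self M Q),
          zero_add]

end CentralConfiguration

section Limit

variable {ι : Type} [Fintype ι] [DecidableEq ι] {α : Type*} {l : Filter α} [l.NeBot]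
  {M : α → ι → ℝ} {Q : α → ι → E2} {Mb : ι → ℝ} {Qb : ι → E2}

theorem ne_of_tendsto_ccEqs (hcc : ∀ s, CCeqs (M s) (Q s)) (hM : ∀ s a, 0 ≤ M s a)
    (hinj : ∀ s, Function.Injective (Q s)) (hMl : ∀ a, Tendsto (fun s => M s a) l (𝓝 (Mb a)))
    (hQl : ∀ a, Tendsto (fun s => Q s a) l (𝓝 (Qb a))) {a b : ι} (hab : a ≠ b)
    (ha : 0 < Mb a) (hb : 0 < Mb b) : Qb a ≠ Qb b := by
  intro hQab
  have hbound : Mb a * Mb b ≤ 2 * (∑ c, Mb c * ‖Qb c‖ ^ 2) * ‖Qb a - Qb b‖ :=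
    le_of_tendsto_of_tendsto' ((hMl a).mul (hMl b))
      ((tendsto_const_nhds.mul
        (tendsto_finsetSum _ fun c _ => (hMl c).mul ((hQl c).norm.pow 2))).mul
        ((hQl a).sub (hQl b)).norm)
      fun s => (hcc s).mul_le_mul_norm_sub (hM s) ((hinj s).ne hab)
  rw [hQab, sub_self, norm_zero, mul_zero] at hbound
  exact (mul_pos ha hb).not_ge hbound

theorem smul_eq_sum_pairForce_of_tendsto (hcc : ∀ s, CCeqs (M s) (Q s))
    (hMl : ∀ a, Tendsto (fun s => M s a) l (𝓝 (Mb a)))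
    (hQl : ∀ a, Tendsto (fun s => Q s a) l (𝓝 (Qb a))) (a : ι)
    (hcluster : ∀ c ≠ a, Qb c = Qb a → Mb c = 0) :
    Mb a • Qb a = ∑ b, pairForce Mb Qb a b := by
  set C := univ.filter fun c => Qb c = Qb a
  have ha : a ∈ C := by simp [C]
  have hlight : ∀ c ∈ C, c ≠ a → Mb c = 0 := fun c hc hca => hcluster c hca (by simpa [C] using hc)
  have hsep : ∀ c ∈ C, ∀ b ∈ Cᶜ, Qb c ≠ Qb b := fun c hc b hb => by
    simp only [C, mem_compl, mem_filter, mem_univ, true_and] at hc hb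
    rwa [hc, ne_comm]
  have hlhs : Tendsto (fun s => ∑ c ∈ C, M s c • Q s c) l (𝓝 (Mb a • Qb a)) := by
    rw [← sum_eq_single_of_mem (f := fun c => Mb c • Qb c) a ha fun c hc hca => by
      rw [hlight c hc hca, zero_smul]]
    exact tendsto_finsetSum _ fun c _ => (hMl c).smul (hQl c)
  have hrhs : Tendsto (fun s => ∑ c ∈ C, M s c • Q s c) l (𝓝 (∑ b ∈ Cᶜ, pairForce Mb Qb a b)) := by
    simp_rw [(hcc _).sum_smul_eq_sum_sum_pairForce_compl C]
    rw [← sum_eq_single_of_mem (f := fun c => ∑ b ∈ Cᶜ, pairForce Mb Qb c b) a ha fun c hc hca =>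
      sum_eq_zero fun b _ => pairForce_of_left_eq_zero Qb (hlight c hc hca) b]
    exact tendsto_finsetSum _ fun c hc =>
      tendsto_finsetSum _ fun b hb => tendsto_pairForce hMl hQl (hsep c hc b hb)
  rw [tendsto_nhds_unique hlhs hrhs]
  refine sum_subset (subset_univ _) fun b _ hb => pairForce_of_eq Mb ?_
  simpa [C, eq_comm] using hb

end Limit

theorem stmt7_general (N k : ℕ)
    (m : ℕ → Fin N → ℝ) (μ : ℕ → Fin k → ℝ)
    (q : ℕ → Fin N → E2) (p : ℕ → Fin k → E2)
    (hm : ∀ s i, 0 < m s i) (hμ : ∀ s j, 0 < μ s j)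
    (hinj : ∀ s, Function.Injective (Sum.elim (q s) (p s)))
    (hcc : ∀ s, CCeqs (Sum.elim (m s) (μ s)) (Sum.elim (q s) (p s)))
    (mbar : Fin N → ℝ) (hmbar : ∀ i, 0 < mbar i)
    (qbar : Fin N → E2) (pbar : Fin k → E2)
    (hmlim : ∀ i, Tendsto (fun s => m s i) atTop (𝓝 (mbar i)))
    (hμlim : ∀ j, Tendsto (fun s => μ s j) atTop (𝓝 (0 : ℝ)))
    (hqlim : ∀ i, Tendsto (fun s => q s i) atTop (𝓝 (qbar i)))
    (hplim : ∀ j, Tendsto (fun s => p s j) atTop (𝓝 (pbar j))) :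
    Function.Injective qbar ∧ CCeqs mbar qbar := by
  have hM : ∀ s a, 0 ≤ Sum.elim (m s) (μ s) a := fun s =>
    Sum.forall.2 ⟨fun i => (hm s i).le, fun j => (hμ s j).le⟩
  have hMl : ∀ a, Tendsto (fun s => Sum.elim (m s) (μ s) a) atTop
      (𝓝 (Sum.elim mbar (0 : Fin k → ℝ) a)) := Sum.forall.2 ⟨hmlim, hμlim⟩
  have hQl : ∀ a, Tendsto (fun s => Sum.elim (q s) (p s) a) atTop
      (𝓝 (Sum.elim qbar pbar a)) := Sum.forall.2 ⟨hqlim, hplim⟩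
  have hqbar : Function.Injective qbar := fun i j hij => by_contra fun hne =>
    ne_of_tendsto_ccEqs hcc hM hinj hMl hQl (Sum.inl_injective.ne hne) (hmbar i) (hmbar j) hij
  refine ⟨hqbar, ccEqs_of_smul_eq_sum_pairForce (fun i => (hmbar i).ne') fun i => ?_⟩
  have hlimit := smul_eq_sum_pairForce_of_tendsto hcc hMl hQl (Sum.inl i) <| by
    rintro (j | j) hne hij
    · exact absurd (congrArg Sum.inl (hqbar hij)) hne
    · rfl
  simpa [Fintype.sum_sum_type, pairForce] using hlimit

/-- in the limit of light masses tending to zero, the heavy bodies of a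
sequence of normalized central configurations of `N + k` bodies converge to pairwise
distinct points forming a normalized central configuration for the limit masses. -/
theorem stmt7 (N k : ℕ) (hN : 2 ≤ N) (hk : 1 ≤ k)
    (m : ℕ → Fin N → ℝ) (μ : ℕ → Fin k → ℝ)
    (q : ℕ → Fin N → E2) (p : ℕ → Fin k → E2)
    (hm : ∀ s i, 0 < m s i) (hμ : ∀ s j, 0 < μ s j)
    (hinj : ∀ s, Function.Injective (Sum.elim (q s) (p s)))
    (hcc : ∀ s, CCeqs (Sum.elim (m s) (μ s)) (Sum.elim (q s) (p s)))
    (mbar : Fin N → ℝ) (hmbar : ∀ i, 0 < mbar i)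
    (qbar : Fin N → E2) (pbar : Fin k → E2)
    (hmlim : ∀ i, Tendsto (fun s => m s i) atTop (𝓝 (mbar i)))
    (hμlim : ∀ j, Tendsto (fun s => μ s j) atTop (𝓝 (0 : ℝ)))
    (hqlim : ∀ i, Tendsto (fun s => q s i) atTop (𝓝 (qbar i)))
    (hplim : ∀ j, Tendsto (fun s => p s j) atTop (𝓝 (pbar j))) :
    Function.Injective qbar ∧ CCeqs mbar qbar :=
  stmt7_general N k m μ q p hm hμ hinj hcc mbar hmbar qbar pbar hmlim hμlim hqlim hplim
end
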